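/- Let f : ℝⁿ → ℝ be differentiable with L-Lipschitz-continuous gradient, ψ : ℝⁿ → ℝ ∪ {+∞} convex, proper, and closed, F = f + ψ, and suppose Q(d) = ∇f(x)ᵀd + (1/2)dᵀHd + ψ(x+d) − ψ(x) is σ-strongly convex for some σ > 0. Let m be the smallest eigenvalue of the symmetric matrix H and let γ ∈ (0,1], η ∈ [0,1). If d satisfies Q(d) ≤ (1 − η)Q* and the condition (1 − γ)·((1 − √η)/(1 + √η))·σ + m ≥ L holds, then the sufficient decrease condition F(x) − F(x + d) ≥ −γ·Q(d) ≥ 0 is satisfied. -/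

import Mathlib

/-
Setting: minimize F = f + ψ over ℝⁿ (modeled as `EuclideanSpace ℝ (Fin n)`), where
f : ℝⁿ → ℝ is smooth and ψ : ℝⁿ → ℝ ∪ {+∞} (modeled as `EReal`-valued, never ⊥)
is convex, proper and closed.  The quadratic model at x with symmetric operator H is
Q(d) = ⟪∇f(x), d⟫ + (1/2)⟪H d, d⟫ + ψ(x+d) − ψ(x), and Δ(d) = ⟪∇f(x), d⟫ + ψ(x+d) − ψ(x).
-/

open scoped RealInnerProductSpace
open Set Filter Topology

noncomputable section

/-- Convexity for extended-real-valued functions (values in ℝ ∪ {±∞}). -/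
def ConvexE {n : ℕ} (g : EuclideanSpace ℝ (Fin n) → EReal) : Prop :=
  ∀ x y : EuclideanSpace ℝ (Fin n), ∀ a b : ℝ, 0 ≤ a → 0 ≤ b → a + b = 1 →
    g (a • x + b • y) ≤ (a : EReal) * g x + (b : EReal) * g y

/-- ψ is proper: it never takes the value −∞ (its values lie in ℝ ∪ {+∞})
and it is finite somewhere. -/
def ProperPsi {n : ℕ} (ψ : EuclideanSpace ℝ (Fin n) → EReal) : Prop :=
  (∀ x, ψ x ≠ ⊥) ∧ ∃ x, ψ x ≠ ⊤

/-- ψ is closed, i.e. lower semicontinuous. -/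
def ClosedPsi {n : ℕ} (ψ : EuclideanSpace ℝ (Fin n) → EReal) : Prop :=
  LowerSemicontinuous ψ

/-- H is a symmetric (self-adjoint) linear operator. -/
def SymmCLM {n : ℕ} (H : EuclideanSpace ℝ (Fin n) →L[ℝ] EuclideanSpace ℝ (Fin n)) : Prop :=
  ∀ u v, ⟪H u, v⟫ = ⟪u, H v⟫

/-- m is the smallest eigenvalue of the symmetric operator H
(characterized as the minimum of the Rayleigh quotient over the unit sphere). -/
def IsSmallestEigenvalue {n : ℕ} (H : EuclideanSpace ℝ (Fin n) →L[ℝ] EuclideanSpace ℝ (Fin n))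
    (m : ℝ) : Prop :=
  IsLeast {r : ℝ | ∃ u : EuclideanSpace ℝ (Fin n), ‖u‖ = 1 ∧ r = ⟪H u, u⟫} m

/-- The objective F = f + ψ (extended-real-valued). -/
def Fm {n : ℕ} (f : EuclideanSpace ℝ (Fin n) → ℝ) (ψ : EuclideanSpace ℝ (Fin n) → EReal)
    (x : EuclideanSpace ℝ (Fin n)) : EReal :=
  (f x : EReal) + ψ x

/-- The quadratic model Q(d) = ∇f(x)ᵀd + (1/2)dᵀHd + ψ(x+d) − ψ(x). -/
def Qm {n : ℕ} (f : EuclideanSpace ℝ (Fin n) → ℝ) (ψ : EuclideanSpace ℝ (Fin n) → EReal)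
    (H : EuclideanSpace ℝ (Fin n) →L[ℝ] EuclideanSpace ℝ (Fin n))
    (x d : EuclideanSpace ℝ (Fin n)) : EReal :=
  ((⟪gradient f x, d⟫ + 1 / 2 * ⟪H d, d⟫ : ℝ) : EReal) + ψ (x + d) - ψ x

/-- Δ(d) = ∇f(x)ᵀd + ψ(x+d) − ψ(x). -/
def Dm {n : ℕ} (f : EuclideanSpace ℝ (Fin n) → ℝ) (ψ : EuclideanSpace ℝ (Fin n) → EReal)
    (x d : EuclideanSpace ℝ (Fin n)) : EReal :=
  ((⟪gradient f x, d⟫ : ℝ) : EReal) + ψ (x + d) - ψ x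

/-- g is σ-strongly convex: g − (σ/2)‖·‖² is convex. -/
def StrongConvexE {n : ℕ} (σ : ℝ) (g : EuclideanSpace ℝ (Fin n) → EReal) : Prop :=
  ConvexE (fun d => g d - ((σ / 2 * ‖d‖ ^ 2 : ℝ) : EReal))

/-- The solution set Ω = argmin F. -/
def SolSet {n : ℕ} (f : EuclideanSpace ℝ (Fin n) → ℝ)
    (ψ : EuclideanSpace ℝ (Fin n) → EReal) : Set (EuclideanSpace ℝ (Fin n)) :=
  {y | ∀ z, Fm f ψ y ≤ Fm f ψ z}

/-!
Strong convexity of `Q` along the segment `[0, d]`, with `Q 0 = 0`, gives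
`Q* ≤ t Q(d) - (σ/2) t (1 - t) ‖d‖²` for `t ∈ [0, 1]`; together with `Q(d) ≤ (1 - η) Q*`,
the choice `t = 1 / (1 + √η)` yields `-Q(d) ≥ (1 - √η)/(1 + √η) · (σ/2) ‖d‖²`.
The descent lemma and `⟪H d, d⟫ ≥ m ‖d‖²` give `F(x) - F(x + d) ≥ -Q(d) - (L - m)/2 · ‖d‖²`,
and the condition on `L` bounds the last term by `(1 - γ)` times the decrease `-Q(d)`.
-/

theorem Differentiable.apply_add_le_of_lipschitz_gradient {E : Type*} [NormedAddCommGroup E]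
    [InnerProductSpace ℝ E] [CompleteSpace E] {f : E → ℝ} {L : ℝ} (hf : Differentiable ℝ f)
    (hlip : ∀ y z, ‖gradient f y - gradient f z‖ ≤ L * ‖y - z‖) (x d : E) :
    f (x + d) ≤ f x + ⟪gradient f x, d⟫ + L / 2 * ‖d‖ ^ 2 := by
  set φ : ℝ → ℝ := fun t => f (x + t • d) - t * ⟪gradient f x, d⟫ - L / 2 * t ^ 2 * ‖d‖ ^ 2
  have hφ' : ∀ t, HasDerivAt φ
      (⟪gradient f (x + t • d) - gradient f x, d⟫ - L * t * ‖d‖ ^ 2) t := by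
    intro t
    have hline : HasDerivAt (fun t : ℝ => x + t • d) d t := by
      simpa using ((hasDerivAt_id t).smul_const d).const_add x
    have hf_line := (hf (x + t • d)).hasGradientAt.hasFDerivAt.comp_hasDerivAt t hline
    refine ((hf_line.sub ((hasDerivAt_id t).mul_const ⟪gradient f x, d⟫)).sub
      (((hasDerivAt_pow 2 t).const_mul (L / 2)).mul_const (‖d‖ ^ 2))).congr_deriv ?_
    simp only [InnerProductSpace.toDual_apply_apply, inner_sub_left]
    ring
  have hanti : AntitoneOn φ (Ici 0) := by
    refine antitoneOn_of_hasDerivWithinAt_nonpos (convex_Ici 0)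
      (fun t _ => (hφ' t).continuousAt.continuousWithinAt)
      (fun t _ => (hφ' t).hasDerivWithinAt) fun t ht => ?_
    rw [interior_Ici] at ht
    have hgrad : ‖gradient f (x + t • d) - gradient f x‖ ≤ L * t * ‖d‖ := by
      simpa [norm_smul, abs_of_pos (mem_Ioi.mp ht), mul_assoc] using hlip (x + t • d) x
    calc ⟪gradient f (x + t • d) - gradient f x, d⟫ - L * t * ‖d‖ ^ 2
        ≤ ‖gradient f (x + t • d) - gradient f x‖ * ‖d‖ - L * t * ‖d‖ ^ 2 := by
          gcongr; exact real_inner_le_norm _ _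
      _ ≤ L * t * ‖d‖ * ‖d‖ - L * t * ‖d‖ ^ 2 := by gcongr
      _ = 0 := by ring
  have := hanti self_mem_Ici (mem_Ici.mpr zero_le_one) zero_le_one
  simp only [φ, zero_smul, add_zero, one_smul, zero_mul, sub_zero, one_mul, one_pow,
    ne_eq, OfNat.ofNat_ne_zero, not_false_eq_true, zero_pow, mul_zero] at this
  linarith

theorem one_sub_div_one_add_mul_le {c q r : ℝ} (hr0 : 0 ≤ r) (hr1 : r < 1)
    (h : ∀ t ∈ Icc (0 : ℝ) 1, (1 - r ^ 2) * c * (t * (1 - t)) ≤ q * (1 - (1 - r ^ 2) * t)) :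
    (1 - r) / (1 + r) * c ≤ q := by
  rcases hr0.eq_or_lt with rfl | hr
  · -- The optimal `t = 1 / (1 + r)` is `1`, where the hypothesis is vacuous: let `t → 1⁻` instead.
    have hlim : Tendsto (fun t : ℝ => t * c) (𝓝[<] 1) (𝓝 c) :=
      ((continuous_mul_const c).tendsto' 1 c (one_mul c)).mono_left nhdsWithin_le_nhds
    rw [sub_zero, add_zero, div_one, one_mul]
    refine le_of_tendsto hlim ?_
    filter_upwards [Ioo_mem_nhdsLT zero_lt_one] with t ht
    have := h t ⟨ht.1.le, ht.2.le⟩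
    have h1t : 0 < 1 - t := sub_pos.mpr ht.2
    nlinarith
  · have h1r : 0 < 1 + r := by linarith
    have := h (1 / (1 + r)) ⟨by positivity, by rw [div_le_one h1r]; linarith⟩
    have e1 : 1 - (1 - r ^ 2) * (1 / (1 + r)) = r := by field_simp; ring
    have e2 : (1 - r ^ 2) * c * (1 / (1 + r) * (1 - 1 / (1 + r))) =
        r * ((1 - r) / (1 + r) * c) := by
      field_simp; ring
    rw [e1, e2, mul_comm q] at this
    exact le_of_mul_le_mul_left this hr

section
variable {n : ℕ}

theorem StrongConvexE.apply_smul_le {σ a t : ℝ} {q : EuclideanSpace ℝ (Fin n) → EReal}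
    {d : EuclideanSpace ℝ (Fin n)} (hsc : StrongConvexE σ q) (hq0 : q 0 = 0) (hd : q d = a)
    (ht0 : 0 ≤ t) (ht1 : t ≤ 1) :
    q (t • d) ≤ ((t * a - σ / 2 * (t * (1 - t)) * ‖d‖ ^ 2 : ℝ) : EReal) := by
  have h := hsc d 0 t (1 - t) ht0 (by linarith) (by ring)
  beta_reduce at h
  rw [smul_zero, add_zero, hd, hq0, norm_zero, norm_smul, Real.norm_of_nonneg ht0] at h
  norm_cast at h
  refine ((EReal.sub_le_iff_le_add (.inl (EReal.coe_ne_bot _)) (.inl (EReal.coe_ne_top _))).1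
    h).trans_eq ?_
  rw [← EReal.coe_add, EReal.coe_eq_coe_iff]
  push_cast
  ring

theorem StrongConvexE.exists_coe_of_approx_min {σ η : ℝ} {q : EuclideanSpace ℝ (Fin n) → EReal}
    {d : EuclideanSpace ℝ (Fin n)} (hsc : StrongConvexE σ q) (hq0 : q 0 = 0)
    (hbot : ∀ e, q e ≠ ⊥) (hη0 : 0 ≤ η) (hη1 : η < 1)
    (happrox : q d ≤ ((1 - η : ℝ) : EReal) * ⨅ e, q e) :
    ∃ a : ℝ, q d = a ∧ a ≤ 0 ∧
      (1 - √η) / (1 + √η) * (σ / 2 * ‖d‖ ^ 2) ≤ -a := by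
  have hinf_le : ⨅ e, q e ≤ 0 := hq0 ▸ iInf_le q 0
  have hinf_ne_bot : ⨅ e, q e ≠ ⊥ := by
    intro h
    rw [h, EReal.coe_mul_bot_of_pos (by linarith)] at happrox
    exact hbot d (le_bot_iff.mp happrox)
  lift ⨅ e, q e to ℝ using ⟨(hinf_le.trans_lt EReal.zero_lt_top).ne, hinf_ne_bot⟩ with b hb
  have hqd : q d ≤ ((1 - η) * b : ℝ) := by rwa [EReal.coe_mul]
  lift q d to ℝ using ⟨(hqd.trans_lt (EReal.coe_lt_top _)).ne, hbot d⟩ with a ha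
  have hab : a ≤ (1 - η) * b := by exact_mod_cast hqd
  have hb0 : b ≤ 0 := by exact_mod_cast hinf_le
  refine ⟨a, rfl, by nlinarith, ?_⟩
  have hsqrt : √η ^ 2 = η := Real.sq_sqrt hη0
  refine one_sub_div_one_add_mul_le (Real.sqrt_nonneg η) (by nlinarith [Real.sqrt_nonneg η])
    fun t ht => ?_
  have hbt : b ≤ t * a - σ / 2 * (t * (1 - t)) * ‖d‖ ^ 2 := by
    have := (hb ▸ iInf_le q (t • d)).trans (hsc.apply_smul_le hq0 ha.symm ht.1 ht.2)
    exact_mod_cast this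
  rw [hsqrt]
  have := mul_le_mul_of_nonneg_left hbt (by linarith : 0 ≤ 1 - η)
  linarith
end

section
variable {n : ℕ} {f : EuclideanSpace ℝ (Fin n) → ℝ} {ψ : EuclideanSpace ℝ (Fin n) → EReal}
  {H : EuclideanSpace ℝ (Fin n) →L[ℝ] EuclideanSpace ℝ (Fin n)} {x : EuclideanSpace ℝ (Fin n)}
  {p : ℝ}

theorem IsSmallestEigenvalue.mul_norm_sq_le {m : ℝ} (hm : IsSmallestEigenvalue H m)
    (d : EuclideanSpace ℝ (Fin n)) : m * ‖d‖ ^ 2 ≤ ⟪H d, d⟫ := by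
  rcases eq_or_ne d 0 with rfl | hd
  · simp
  have hu := hm.2 ⟨‖d‖⁻¹ • d, norm_smul_inv_norm hd, rfl⟩
  rw [map_smul, real_inner_smul_left, real_inner_smul_right, ← mul_assoc, ← sq,
    inv_pow, inv_mul_eq_div, le_div_iff₀ (by positivity)] at hu
  exact hu

theorem Qm_zero (hp : ψ x = p) : Qm f ψ H x 0 = 0 := by
  simp only [Qm, hp, add_zero, map_zero, inner_zero_right, mul_zero, EReal.coe_zero, zero_add,
    ← EReal.coe_sub, sub_self]

theorem Qm_ne_bot (hbot : ∀ y, ψ y ≠ ⊥) (hp : ψ x = p) (d : EuclideanSpace ℝ (Fin n)) :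
    Qm f ψ H x d ≠ ⊥ := by
  rw [Qm, hp]
  rcases eq_or_ne (ψ (x + d)) ⊤ with htop | htop
  · rw [htop, EReal.coe_add_top, EReal.top_sub_coe]
    exact top_ne_bot
  · lift ψ (x + d) to ℝ using ⟨htop, hbot _⟩ with r
    exact_mod_cast EReal.coe_ne_bot _

theorem Fm_sub_Fm_add_eq (hp : ψ x = p) {d : EuclideanSpace ℝ (Fin n)} {a : ℝ}
    (hd : Qm f ψ H x d = a) :
    Fm f ψ x - Fm f ψ (x + d) =
      ((f x - f (x + d) + ⟪gradient f x, d⟫ + 1 / 2 * ⟪H d, d⟫ - a : ℝ) : EReal) := by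
  rw [Qm, hp] at hd
  rw [Fm, Fm, hp]
  have htop : ψ (x + d) ≠ ⊤ := by
    intro h
    rw [h, EReal.coe_add_top, EReal.top_sub_coe] at hd
    exact EReal.coe_ne_top a hd.symm
  have hbot : ψ (x + d) ≠ ⊥ := by
    intro h
    rw [h, EReal.add_bot, EReal.bot_sub] at hd
    exact EReal.coe_ne_bot a hd.symm
  lift ψ (x + d) to ℝ using ⟨htop, hbot⟩ with r
  norm_cast at hd ⊢
  rw [← hd]
  ring
end

theorem sufficient_decrease_of_H_large_general {n : ℕ}
    (f : EuclideanSpace ℝ (Fin n) → ℝ) (ψ : EuclideanSpace ℝ (Fin n) → EReal)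
    (H : EuclideanSpace ℝ (Fin n) →L[ℝ] EuclideanSpace ℝ (Fin n))
    (x d : EuclideanSpace ℝ (Fin n)) (L σ m γ η : ℝ)
    (hf : Differentiable ℝ f)
    (hlip : ∀ y z, ‖gradient f y - gradient f z‖ ≤ L * ‖y - z‖)
    (hψproper : ProperPsi ψ)
    (hdom : ψ x ≠ ⊤)
    (hsc : StrongConvexE σ (Qm f ψ H x))
    (hm : IsSmallestEigenvalue H m)
    (hγ0 : 0 < γ) (hγ1 : γ ≤ 1) (hη0 : 0 ≤ η) (hη1 : η < 1)
    (happrox : Qm f ψ H x d ≤ ((1 - η : ℝ) : EReal) * ⨅ e, Qm f ψ H x e)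
    (hcond : L ≤ (1 - γ) * ((1 - Real.sqrt η) / (1 + Real.sqrt η)) * σ + m) :
    ((-γ : ℝ) : EReal) * Qm f ψ H x d ≤ Fm f ψ x - Fm f ψ (x + d) ∧
      (0 : EReal) ≤ ((-γ : ℝ) : EReal) * Qm f ψ H x d := by
  obtain ⟨hbot, -⟩ := hψproper
  obtain ⟨p, hp⟩ : ∃ p : ℝ, ψ x = p := ⟨(ψ x).toReal, (EReal.coe_toReal hdom (hbot x)).symm⟩
  obtain ⟨a, hQd, ha0, hdecrease⟩ :=
    hsc.exists_coe_of_approx_min (Qm_zero hp) (Qm_ne_bot hbot hp) hη0 hη1 happrox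
  have hdescent := hf.apply_add_le_of_lipschitz_gradient hlip x d
  have heig := hm.mul_norm_sq_le d
  have hdecrease' := mul_le_mul_of_nonneg_left hdecrease (sub_nonneg.mpr hγ1)
  have hcond' := mul_le_mul_of_nonneg_right hcond (by positivity : 0 ≤ ‖d‖ ^ 2 / 2)
  rw [Fm_sub_Fm_add_eq hp hQd, hQd, ← EReal.coe_mul, EReal.coe_le_coe_iff, EReal.coe_nonneg]
  exact ⟨by linarith, mul_nonneg_of_nonpos_of_nonpos (by linarith) ha0⟩

/-- With ∇f L-Lipschitz, Q σ-strongly convex, m the smallest eigenvalue of H,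
γ ∈ (0,1], η ∈ [0,1), if d satisfies Q(d) ≤ (1 − η)Q* and
(1 − γ)·((1 − √η)/(1 + √η))·σ + m ≥ L, then the sufficient decrease condition
F(x) − F(x + d) ≥ −γ·Q(d) ≥ 0 holds. -/
theorem sufficient_decrease_of_H_large {n : ℕ}
    (f : EuclideanSpace ℝ (Fin n) → ℝ) (ψ : EuclideanSpace ℝ (Fin n) → EReal)
    (H : EuclideanSpace ℝ (Fin n) →L[ℝ] EuclideanSpace ℝ (Fin n))
    (x d : EuclideanSpace ℝ (Fin n)) (L σ m γ η : ℝ)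
    (hf : Differentiable ℝ f)
    (hlip : ∀ y z, ‖gradient f y - gradient f z‖ ≤ L * ‖y - z‖)
    (hψconv : ConvexE ψ) (hψproper : ProperPsi ψ) (hψclosed : ClosedPsi ψ)
    (hdom : ψ x ≠ ⊤)
    (hH : SymmCLM H)
    (hσ : 0 < σ) (hsc : StrongConvexE σ (Qm f ψ H x))
    (hm : IsSmallestEigenvalue H m)
    (hγ0 : 0 < γ) (hγ1 : γ ≤ 1) (hη0 : 0 ≤ η) (hη1 : η < 1)
    (happrox : Qm f ψ H x d ≤ ((1 - η : ℝ) : EReal) * ⨅ e, Qm f ψ H x e)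
    (hcond : L ≤ (1 - γ) * ((1 - Real.sqrt η) / (1 + Real.sqrt η)) * σ + m) :
    ((-γ : ℝ) : EReal) * Qm f ψ H x d ≤ Fm f ψ x - Fm f ψ (x + d) ∧
      (0 : EReal) ≤ ((-γ : ℝ) : EReal) * Qm f ψ H x d :=
  sufficient_decrease_of_H_large_general f ψ H x d L σ m γ η hf hlip hψproper hdom hsc hm hγ0 hγ1
    hη0 hη1 happrox hcond
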